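/- Let ρ_1, ρ_2 be density matrices and 0 < p < 1, and set ρ = p ρ_1 + (1-p) ρ_2. Then S(ρ) ≤ p S(ρ_1) + (1-p) S(ρ_2) + h(p), where h(p) = -p log p - (1-p) log(1-p), with equality if and only if ρ_1 ρ_2 = 0 (i.e., ρ_1 and ρ_2 have orthogonal supports). -/

import Mathlib

open scoped Kronecker ComplexOrder
open Matrix

noncomputable def vN {n : Type*} [Fintype n] [DecidableEq n] (ρ : Matrix n n ℂ) : ℝ :=
  if h : ρ.IsHermitian then ∑ i, Real.negMulLog (h.eigenvalues i) else 0

def IsDensity {n : Type*} [Fintype n] [DecidableEq n] (ρ : Matrix n n ℂ) : Prop :=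
  ρ.PosSemidef ∧ ρ.trace = 1

noncomputable def pureDM {n : Type*} (ψ : n → ℂ) : Matrix n n ℂ :=
  Matrix.vecMulVec ψ (star ψ)

section tri

variable {a b c : Type*} [Fintype a] [Fintype b] [Fintype c]

noncomputable def rA (ρ : Matrix (a × b × c) (a × b × c) ℂ) : Matrix a a ℂ :=
  Matrix.of fun i j => ∑ y : b, ∑ z : c, ρ (i, y, z) (j, y, z)

noncomputable def rB (ρ : Matrix (a × b × c) (a × b × c) ℂ) : Matrix b b ℂ :=
  Matrix.of fun i j => ∑ x : a, ∑ z : c, ρ (x, i, z) (x, j, z)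

noncomputable def rC (ρ : Matrix (a × b × c) (a × b × c) ℂ) : Matrix c c ℂ :=
  Matrix.of fun i j => ∑ x : a, ∑ y : b, ρ (x, y, i) (x, y, j)

noncomputable def rAB (ρ : Matrix (a × b × c) (a × b × c) ℂ) : Matrix (a × b) (a × b) ℂ :=
  Matrix.of fun i j => ∑ z : c, ρ (i.1, i.2, z) (j.1, j.2, z)

noncomputable def rBC (ρ : Matrix (a × b × c) (a × b × c) ℂ) : Matrix (b × c) (b × c) ℂ :=
  Matrix.of fun i j => ∑ x : a, ρ (x, i.1, i.2) (x, j.1, j.2)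

noncomputable def rAC (ρ : Matrix (a × b × c) (a × b × c) ℂ) : Matrix (a × c) (a × c) ℂ :=
  Matrix.of fun i j => ∑ y : b, ρ (i.1, y, i.2) (j.1, y, j.2)

noncomputable def qCMI [DecidableEq a] [DecidableEq b] [DecidableEq c]
    (ρ : Matrix (a × b × c) (a × b × c) ℂ) : ℝ :=
  vN (rAB ρ) + vN (rBC ρ) - vN (rB ρ) - vN ρ

noncomputable def bOp [DecidableEq a] [DecidableEq c] (K : Matrix b b ℂ) :
    Matrix (a × b × c) (a × b × c) ℂ :=
  (1 : Matrix a a ℂ) ⊗ₖ (K ⊗ₖ (1 : Matrix c c ℂ))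

noncomputable def applyB [DecidableEq a] [DecidableEq c] {ι : Type*} [Fintype ι]
    (K : ι → Matrix b b ℂ) (ρ : Matrix (a × b × c) (a × b × c) ℂ) :
    Matrix (a × b × c) (a × b × c) ℂ :=
  ∑ i, bOp (a := a) (c := c) (K i) * ρ * (bOp (K i))ᴴ

end tri

/-!
Write `P = p ρ₁` and `Q = (1 - p) ρ₂`. The mixture `P + Q` is `Mᴴ M` for the column
`M = [√P; √Q]`, so it has the same nonzero spectrum as
`M Mᴴ = [[P, √P √Q], [√Q √P, Q]]`. Pinching this block matrix to its diagonal blocks can only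
increase the entropy: after a block-diagonal unitary change of basis diagonalizing both blocks,
the diagonal of a positive semidefinite matrix with unitary eigenbasis `V` is the image of its
spectrum under the doubly stochastic matrix `(|V i j|²)`, and `negMulLog` is concave (Jensen). Strict concavity makes the equality case force the off-diagonal block
`√P √Q` to vanish, which happens iff `P Q = 0`. Finally `S(c ρ) = c S(ρ) - c log c` for a
density matrix `ρ`, which turns `S(P) + S(Q)` into the right-hand side.
-/

open Real

section DoublyStochastic

variable {n : Type*} [Fintype n] [DecidableEq n] {B : Matrix n n ℝ} {x : n → ℝ}

lemma sum_mul_negMulLog_le_negMulLog_mulVec (hB : B ∈ doublyStochastic ℝ n) (hx : 0 ≤ x)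
    (i : n) : ∑ j, B i j * negMulLog (x j) ≤ negMulLog ((B *ᵥ x) i) :=
  concaveOn_negMulLog.le_map_sum (fun _ _ => nonneg_of_mem_doublyStochastic hB)
    (sum_row_of_mem_doublyStochastic hB i) (fun j _ => Set.mem_Ici.2 (hx j))

lemma sum_eq_sum_sum_mul_of_mem_doublyStochastic (hB : B ∈ doublyStochastic ℝ n) (f : n → ℝ) :
    ∑ j, f j = ∑ i, ∑ j, B i j * f j := by
  rw [Finset.sum_comm]
  simp_rw [← Finset.sum_mul, sum_col_of_mem_doublyStochastic hB, one_mul]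

theorem sum_negMulLog_le_sum_negMulLog_mulVec (hB : B ∈ doublyStochastic ℝ n) (hx : 0 ≤ x) :
    ∑ j, negMulLog (x j) ≤ ∑ i, negMulLog ((B *ᵥ x) i) := by
  rw [sum_eq_sum_sum_mul_of_mem_doublyStochastic hB]
  exact Finset.sum_le_sum fun i _ => sum_mul_negMulLog_le_negMulLog_mulVec hB hx i

theorem eq_mulVec_apply_of_sum_negMulLog_mulVec_eq (hB : B ∈ doublyStochastic ℝ n)
    (hx : 0 ≤ x) (h : ∑ i, negMulLog ((B *ᵥ x) i) = ∑ j, negMulLog (x j)) {i j : n}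
    (hij : B i j ≠ 0) : x j = (B *ᵥ x) i := by
  have hgap : ∀ i ∈ Finset.univ,
      0 ≤ negMulLog ((B *ᵥ x) i) - ∑ j, B i j * negMulLog (x j) :=
    fun i _ => sub_nonneg.2 (sum_mul_negMulLog_le_negMulLog_mulVec hB hx i)
  have hzero : ∑ i, (negMulLog ((B *ᵥ x) i) - ∑ j, B i j * negMulLog (x j)) = 0 := by
    rw [Finset.sum_sub_distrib, ← sum_eq_sum_sum_mul_of_mem_doublyStochastic hB, h, sub_self]
  have hJensen := sub_eq_zero.1 <|
    (Finset.sum_eq_zero_iff_of_nonneg hgap).1 hzero i (Finset.mem_univ i)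
  exact (strictConcaveOn_negMulLog.map_sum_eq_iff' (fun _ _ => nonneg_of_mem_doublyStochastic hB)
    (sum_row_of_mem_doublyStochastic hB i) (fun j _ => Set.mem_Ici.2 (hx j))).1 hJensen j
    (Finset.mem_univ j) hij

end DoublyStochastic

section Unitary

variable {n : Type*} [Fintype n] [DecidableEq n] {A U : Matrix n n ℂ}

theorem normSq_mem_doublyStochastic (hU : U ∈ unitaryGroup n ℂ) :
    (of fun i j => Complex.normSq (U i j)) ∈ doublyStochastic ℝ n := by
  have hrow (i : n) : ∑ j, Complex.normSq (U i j) = 1 := by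
    have := congrFun (congrFun (mem_unitaryGroup_iff.1 hU) i) i
    simp only [mul_apply, star_apply, Complex.star_def, Complex.mul_conj, one_apply_eq] at this
    exact_mod_cast this
  have hcol (j : n) : ∑ i, Complex.normSq (U i j) = 1 := by
    have := congrFun (congrFun (mem_unitaryGroup_iff'.1 hU) j) j
    simp only [mul_apply, star_apply, Complex.star_def, mul_comm (starRingEnd ℂ _),
      Complex.mul_conj, one_apply_eq] at this
    exact_mod_cast this
  exact mem_doublyStochastic_iff_sum.2 ⟨fun i j => Complex.normSq_nonneg _, hrow, hcol⟩

lemma Matrix.IsHermitian.exists_unitary_eq_conj_diagonal (hA : A.IsHermitian) :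
    ∃ U ∈ unitaryGroup n ℂ, A = U * diagonal (fun k => (hA.eigenvalues k : ℂ)) * star U :=
  ⟨_, hA.eigenvectorUnitary.2, by
    conv_lhs => rw [hA.spectral_theorem, Unitary.conjStarAlgAut_apply]
    rfl⟩

end Unitary

section VonNeumann

open Polynomial

variable {m n : Type*} [Fintype m] [DecidableEq m] [Fintype n] [DecidableEq n]

theorem vN_eq_sum_eigenvalues {A : Matrix n n ℂ} (hA : A.IsHermitian) :
    vN A = ∑ i, negMulLog (hA.eigenvalues i) := by
  rw [vN, dif_pos hA]

theorem vN_eq_sum_roots_charpoly {A : Matrix n n ℂ} (hA : A.IsHermitian) :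
    vN A = (A.charpoly.roots.map fun z => negMulLog z.re).sum := by
  simp [vN_eq_sum_eigenvalues hA, hA.roots_charpoly_eq_eigenvalues, Multiset.map_map]

theorem vN_eq_of_X_pow_mul_charpoly_eq {A : Matrix m m ℂ} {B : Matrix n n ℂ}
    (hA : A.IsHermitian) (hB : B.IsHermitian) {k l : ℕ}
    (h : X ^ k * A.charpoly = X ^ l * B.charpoly) : vN A = vN B := by
  have hne : X ^ l * B.charpoly ≠ 0 := ((monic_X_pow l).mul B.charpoly_monic).ne_zero
  have hroots := congrArg Polynomial.roots h
  rw [roots_mul (h ▸ hne), roots_mul hne, roots_X_pow, roots_X_pow] at hroots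
  have := congrArg (fun s : Multiset ℂ => (s.map fun z => negMulLog z.re).sum) hroots
  simpa [vN_eq_sum_roots_charpoly hA, vN_eq_sum_roots_charpoly hB, Multiset.nsmul_singleton]
    using this

theorem vN_mul_conjTranspose (M : Matrix m n ℂ) : vN (M * Mᴴ) = vN (Mᴴ * M) :=
  vN_eq_of_X_pow_mul_charpoly_eq (isHermitian_mul_conjTranspose_self M)
    (isHermitian_conjTranspose_mul_self M) (charpoly_mul_comm' M Mᴴ)

theorem vN_mul_mul_star {A U : Matrix n n ℂ} (hA : A.IsHermitian) (hU : U ∈ unitaryGroup n ℂ) :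
    vN (U * A * star U) = vN A := by
  refine vN_eq_of_X_pow_mul_charpoly_eq (k := 0) (l := 0) ?_ hA ?_
  · simpa [star_eq_conjTranspose] using isHermitian_mul_mul_conjTranspose U hA
  · rw [charpoly_mul_comm, ← mul_assoc, mem_unitaryGroup_iff'.1 hU, one_mul]

theorem vN_star_mul_mul {A U : Matrix n n ℂ} (hA : A.IsHermitian) (hU : U ∈ unitaryGroup n ℂ) :
    vN (star U * A * U) = vN A := by
  simpa using vN_mul_mul_star hA (Unitary.star_mem hU)

omit [Fintype n] in
lemma isHermitian_diagonal_ofReal (d : n → ℝ) : (diagonal fun i => (d i : ℂ)).IsHermitian :=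
  isHermitian_diagonal_iff.2 fun i => Complex.conj_ofReal (d i)

theorem vN_diagonal (d : n → ℝ) : vN (diagonal fun i => (d i : ℂ)) = ∑ i, negMulLog (d i) := by
  rw [vN_eq_sum_roots_charpoly (isHermitian_diagonal_ofReal d), charpoly_diagonal,
    roots_prod _ _ (by simp [Finset.prod_ne_zero_iff, X_sub_C_ne_zero])]
  simp

theorem vN_fromBlocks_zero {A : Matrix m m ℂ} {D : Matrix n n ℂ} (hA : A.IsHermitian)
    (hD : D.IsHermitian) : vN (fromBlocks A 0 0 D) = vN A + vN D := by
  have hAD : (fromBlocks A 0 0 D).IsHermitian :=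
    isHermitian_fromBlocks_iff.2 ⟨hA, by simp, by simp, hD⟩
  rw [vN_eq_sum_roots_charpoly hAD, charpoly_fromBlocks_zero₁₂,
    roots_mul (A.charpoly_monic.mul D.charpoly_monic).ne_zero, Multiset.map_add,
    Multiset.sum_add, ← vN_eq_sum_roots_charpoly hA, ← vN_eq_sum_roots_charpoly hD]

theorem vN_ofReal_smul {A : Matrix n n ℂ} (hA : A.IsHermitian) (c : ℝ) :
    vN ((c : ℂ) • A) = c * vN A + negMulLog c * A.trace.re := by
  obtain ⟨U, hU, hAU⟩ := hA.exists_unitary_eq_conj_diagonal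
  have hcA : (c : ℂ) • A = U * diagonal (fun i => ((c * hA.eigenvalues i : ℝ) : ℂ)) * star U := by
    have hd : (fun i => ((c * hA.eigenvalues i : ℝ) : ℂ)) =
        (c : ℂ) • fun i => (hA.eigenvalues i : ℂ) := by
      ext; simp
    conv_lhs => rw [hAU]
    rw [hd, diagonal_smul, mul_smul_comm, smul_mul_assoc]
  rw [hcA, vN_mul_mul_star (isHermitian_diagonal_ofReal _) hU, vN_diagonal,
    vN_eq_sum_eigenvalues hA, hA.trace_eq_sum_eigenvalues]
  simp [negMulLog_mul, Finset.sum_add_distrib, Finset.mul_sum, mul_comm, add_comm]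

end VonNeumann

section Dephasing

variable {n : Type*} [Fintype n] [DecidableEq n] {A U : Matrix n n ℂ} {d : n → ℝ}

lemma apply_eq_sum_of_eq_conj_diagonal (hAU : A = U * diagonal (fun k => (d k : ℂ)) * star U)
    (i j : n) : A i j = ∑ k, U i k * d k * star (U j k) := by
  rw [hAU, mul_apply]
  simp [mul_diagonal]

lemma re_apply_self_eq_mulVec_of_eq_conj_diagonal
    (hAU : A = U * diagonal (fun k => (d k : ℂ)) * star U) (i : n) :
    (A i i).re = ((of fun i k => Complex.normSq (U i k)) *ᵥ d) i := by
  rw [apply_eq_sum_of_eq_conj_diagonal hAU, Complex.re_sum]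
  refine Finset.sum_congr rfl fun k _ => ?_
  simp [Complex.normSq_apply]
  ring

theorem vN_le_sum_negMulLog_diag (hA : A.PosSemidef) : vN A ≤ ∑ i, negMulLog (A i i).re := by
  obtain ⟨U, hU, hAU⟩ := hA.1.exists_unitary_eq_conj_diagonal
  simp_rw [vN_eq_sum_eigenvalues hA.1, re_apply_self_eq_mulVec_of_eq_conj_diagonal hAU]
  exact sum_negMulLog_le_sum_negMulLog_mulVec (normSq_mem_doublyStochastic hU)
    hA.eigenvalues_nonneg

theorem isDiag_of_vN_eq_sum_negMulLog_diag (hA : A.PosSemidef)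
    (h : vN A = ∑ i, negMulLog (A i i).re) : A.IsDiag := by
  obtain ⟨U, hU, hAU⟩ := hA.1.exists_unitary_eq_conj_diagonal
  have hconst : ∀ i k, U i k ≠ 0 → hA.1.eigenvalues k = (A i i).re := by
    intro i k hik
    rw [re_apply_self_eq_mulVec_of_eq_conj_diagonal hAU]
    refine eq_mulVec_apply_of_sum_negMulLog_mulVec_eq (normSq_mem_doublyStochastic hU)
      hA.eigenvalues_nonneg ?_ (by simpa using hik)
    simpa [re_apply_self_eq_mulVec_of_eq_conj_diagonal hAU, vN_eq_sum_eigenvalues hA.1]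
      using h.symm
  intro i j hij
  calc A i j = ∑ k, U i k * hA.1.eigenvalues k * star (U j k) :=
        apply_eq_sum_of_eq_conj_diagonal hAU i j
    _ = ∑ k, U i k * (A j j).re * star (U j k) := by
        refine Finset.sum_congr rfl fun k _ => ?_
        by_cases hjk : U j k = 0
        · simp [hjk]
        · rw [hconst j k hjk]
    _ = (A j j).re * (U * star U) i j := by
        simp only [mul_apply, star_apply, Finset.mul_sum]
        exact Finset.sum_congr rfl fun k _ => by ring
    _ = 0 := by rw [mem_unitaryGroup_iff.1 hU, one_apply_ne hij, mul_zero]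

end Dephasing

section Pinching

variable {m n : Type*} [Fintype m] [DecidableEq m] [Fintype n] [DecidableEq n]
  {A : Matrix m m ℂ} {B : Matrix m n ℂ} {C : Matrix n m ℂ} {D : Matrix n n ℂ}

lemma fromBlocks_mem_unitaryGroup {U : Matrix m m ℂ} {V : Matrix n n ℂ}
    (hU : U ∈ unitaryGroup m ℂ) (hV : V ∈ unitaryGroup n ℂ) :
    fromBlocks U 0 0 V ∈ unitaryGroup (m ⊕ n) ℂ := by
  rw [mem_unitaryGroup_iff, star_eq_conjTranspose, fromBlocks_conjTranspose, fromBlocks_multiply,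
    ← star_eq_conjTranspose, ← star_eq_conjTranspose, mem_unitaryGroup_iff.1 hU,
    mem_unitaryGroup_iff.1 hV]
  simp

omit [DecidableEq m] [DecidableEq n] in
lemma star_fromBlocks_mul_fromBlocks_mul_fromBlocks (U : Matrix m m ℂ) (V : Matrix n n ℂ) :
    star (fromBlocks U 0 0 V) * fromBlocks A B C D * fromBlocks U 0 0 V =
      fromBlocks (star U * A * U) (star U * B * V) (star V * C * U) (star V * D * V) := by
  simp [star_eq_conjTranspose, fromBlocks_conjTranspose, fromBlocks_multiply]

lemma exists_unitary_conj_fromBlocks_eq (hA : A.IsHermitian) (hD : D.IsHermitian) :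
    ∃ U ∈ unitaryGroup m ℂ, ∃ V ∈ unitaryGroup n ℂ,
      star (fromBlocks U 0 0 V) * fromBlocks A B C D * fromBlocks U 0 0 V =
        fromBlocks (diagonal fun i => (hA.eigenvalues i : ℂ)) (star U * B * V) (star V * C * U)
          (diagonal fun i => (hD.eigenvalues i : ℂ)) := by
  refine ⟨_, hA.eigenvectorUnitary.2, _, hD.eigenvectorUnitary.2, ?_⟩
  have hA' := hA.conjStarAlgAut_star_eigenvectorUnitary
  have hD' := hD.conjStarAlgAut_star_eigenvectorUnitary
  simp only [Unitary.conjStarAlgAut_star_apply] at hA' hD'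
  rw [star_fromBlocks_mul_fromBlocks_mul_fromBlocks, hA', hD']
  rfl

theorem vN_fromBlocks_le (hM : (fromBlocks A B C D).PosSemidef) :
    vN (fromBlocks A B C D) ≤ vN A + vN D := by
  obtain ⟨hA, -, -, hD⟩ := isHermitian_fromBlocks_iff.1 hM.1
  obtain ⟨U, hU, V, hV, hconj⟩ := exists_unitary_conj_fromBlocks_eq (B := B) (C := C) hA hD
  calc vN (fromBlocks A B C D)
      = vN (star (fromBlocks U 0 0 V) * fromBlocks A B C D * fromBlocks U 0 0 V) :=
        (vN_star_mul_mul hM.1 (fromBlocks_mem_unitaryGroup hU hV)).symm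
    _ ≤ _ := vN_le_sum_negMulLog_diag
        (star_eq_conjTranspose (fromBlocks U 0 0 V) ▸ hM.conjTranspose_mul_mul_same _)
    _ = vN A + vN D := by
        rw [hconj, vN_eq_sum_eigenvalues hA, vN_eq_sum_eigenvalues hD, Fintype.sum_sum_type]
        simp

theorem vN_fromBlocks_eq_iff (hM : (fromBlocks A B C D).PosSemidef) :
    vN (fromBlocks A B C D) = vN A + vN D ↔ B = 0 := by
  obtain ⟨hA, hBC, -, hD⟩ := isHermitian_fromBlocks_iff.1 hM.1
  refine ⟨fun h => ?_, fun hB => ?_⟩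
  · obtain ⟨U, hU, V, hV, hconj⟩ := exists_unitary_conj_fromBlocks_eq (B := B) (C := C) hA hD
    have hdiag := isDiag_of_vN_eq_sum_negMulLog_diag
      (star_eq_conjTranspose (fromBlocks U 0 0 V) ▸ hM.conjTranspose_mul_mul_same _) (by
        rw [vN_star_mul_mul hM.1 (fromBlocks_mem_unitaryGroup hU hV), h, hconj,
          vN_eq_sum_eigenvalues hA, vN_eq_sum_eigenvalues hD, Fintype.sum_sum_type]
        simp)
    rw [hconj] at hdiag
    have hB : star U * B * V = 0 := (isDiag_fromBlocks_iff.1 hdiag).2.1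
    calc B = U * star U * B * (V * star V) := by
          rw [Unitary.mul_star_self_of_mem hU, Unitary.mul_star_self_of_mem hV, Matrix.one_mul,
            Matrix.mul_one]
      _ = U * (star U * B * V) * star V := by simp only [Matrix.mul_assoc]
      _ = 0 := by rw [hB, Matrix.mul_zero, Matrix.zero_mul]
  · rw [← hBC, hB, conjTranspose_zero]
    exact vN_fromBlocks_zero hA hD

end Pinching

section Subadditivity

variable {n : Type*} [Fintype n] [DecidableEq n]

theorem Matrix.IsHermitian.mul_eq_zero_iff_mul_self_mul_mul_self {a b : Matrix n n ℂ}
    (ha : a.IsHermitian) (hb : b.IsHermitian) : a * b = 0 ↔ a * a * (b * b) = 0 := by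
  refine ⟨fun h => by rw [← mul_assoc, mul_assoc a, h, mul_zero, zero_mul], fun h => ?_⟩
  rw [← trace_conjTranspose_mul_self_eq_zero_iff, conjTranspose_mul, ha.eq, hb.eq,
    ← mul_assoc, trace_mul_cycle, ← mul_assoc, mul_assoc, trace_mul_comm, h, trace_zero]

open scoped MatrixOrder

variable {P Q : Matrix n n ℂ}

lemma conjTranspose_fromRows_sqrt_mul_fromRows_sqrt (hP : P.PosSemidef) (hQ : Q.PosSemidef) :
    (fromRows (CFC.sqrt P) (CFC.sqrt Q))ᴴ * fromRows (CFC.sqrt P) (CFC.sqrt Q) = P + Q := by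
  rw [conjTranspose_fromRows_eq_fromCols_conjTranspose, fromCols_mul_fromRows,
    (CFC.sqrt_nonneg P).isSelfAdjoint.isHermitian.eq,
    (CFC.sqrt_nonneg Q).isSelfAdjoint.isHermitian.eq,
    CFC.sqrt_mul_sqrt_self P hP.nonneg, CFC.sqrt_mul_sqrt_self Q hQ.nonneg]

lemma fromRows_sqrt_mul_conjTranspose_fromRows_sqrt (hP : P.PosSemidef) (hQ : Q.PosSemidef) :
    fromRows (CFC.sqrt P) (CFC.sqrt Q) * (fromRows (CFC.sqrt P) (CFC.sqrt Q))ᴴ =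
      fromBlocks P (CFC.sqrt P * CFC.sqrt Q) (CFC.sqrt Q * CFC.sqrt P) Q := by
  rw [conjTranspose_fromRows_eq_fromCols_conjTranspose, fromRows_mul_fromCols,
    (CFC.sqrt_nonneg P).isSelfAdjoint.isHermitian.eq,
    (CFC.sqrt_nonneg Q).isSelfAdjoint.isHermitian.eq,
    CFC.sqrt_mul_sqrt_self P hP.nonneg, CFC.sqrt_mul_sqrt_self Q hQ.nonneg]

theorem vN_add_le (hP : P.PosSemidef) (hQ : Q.PosSemidef) : vN (P + Q) ≤ vN P + vN Q := by
  have hM := fromRows_sqrt_mul_conjTranspose_fromRows_sqrt hP hQ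
  rw [← conjTranspose_fromRows_sqrt_mul_fromRows_sqrt hP hQ, ← vN_mul_conjTranspose, hM]
  exact vN_fromBlocks_le (hM ▸ posSemidef_self_mul_conjTranspose _)

theorem vN_add_eq_iff (hP : P.PosSemidef) (hQ : Q.PosSemidef) :
    vN (P + Q) = vN P + vN Q ↔ P * Q = 0 := by
  have hM := fromRows_sqrt_mul_conjTranspose_fromRows_sqrt hP hQ
  rw [← conjTranspose_fromRows_sqrt_mul_fromRows_sqrt hP hQ, ← vN_mul_conjTranspose, hM,
    vN_fromBlocks_eq_iff (hM ▸ posSemidef_self_mul_conjTranspose _),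
    (CFC.sqrt_nonneg P).isSelfAdjoint.isHermitian.mul_eq_zero_iff_mul_self_mul_mul_self
      (CFC.sqrt_nonneg Q).isSelfAdjoint.isHermitian,
    CFC.sqrt_mul_sqrt_self P hP.nonneg, CFC.sqrt_mul_sqrt_self Q hQ.nonneg]

end Subadditivity

/-- For density matrices `ρ₁, ρ₂` and `0 < p < 1`, the mixture
`ρ = p ρ₁ + (1-p) ρ₂` satisfies `S(ρ) ≤ p S(ρ₁) + (1-p) S(ρ₂) + h(p)` with
`h(p) = -p log p - (1-p) log (1-p)`, with equality iff `ρ₁ ρ₂ = 0`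
(orthogonal supports). -/
theorem mixing_entropy_bound_two
    {n : Type*} [Fintype n] [DecidableEq n]
    (ρ₁ ρ₂ : Matrix n n ℂ) (h₁ : IsDensity ρ₁) (h₂ : IsDensity ρ₂)
    (p : ℝ) (hp0 : 0 < p) (hp1 : p < 1) :
    vN ((p : ℂ) • ρ₁ + ((1 - p : ℝ) : ℂ) • ρ₂)
        ≤ p * vN ρ₁ + (1 - p) * vN ρ₂ + (Real.negMulLog p + Real.negMulLog (1 - p)) ∧
      (vN ((p : ℂ) • ρ₁ + ((1 - p : ℝ) : ℂ) • ρ₂)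
          = p * vN ρ₁ + (1 - p) * vN ρ₂ + (Real.negMulLog p + Real.negMulLog (1 - p))
        ↔ ρ₁ * ρ₂ = 0) := by
  obtain ⟨hρ₁, htr₁⟩ := h₁
  obtain ⟨hρ₂, htr₂⟩ := h₂
  have hq0 : 0 < 1 - p := sub_pos.2 hp1
  have hP : ((p : ℂ) • ρ₁).PosSemidef := hρ₁.smul (by exact_mod_cast hp0.le)
  have hQ : (((1 - p : ℝ) : ℂ) • ρ₂).PosSemidef := hρ₂.smul (by exact_mod_cast hq0.le)
  have hsplit : vN ((p : ℂ) • ρ₁) + vN (((1 - p : ℝ) : ℂ) • ρ₂) =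
      p * vN ρ₁ + (1 - p) * vN ρ₂ + (negMulLog p + negMulLog (1 - p)) := by
    rw [vN_ofReal_smul hρ₁.1, vN_ofReal_smul hρ₂.1, htr₁, htr₂, Complex.one_re]
    ring
  have horth : (p : ℂ) • ρ₁ * ((1 - p : ℝ) : ℂ) • ρ₂ = 0 ↔ ρ₁ * ρ₂ = 0 := by
    rw [smul_mul_smul_comm, ← Complex.ofReal_mul]
    exact smul_eq_zero_iff_right (by exact_mod_cast (mul_pos hp0 hq0).ne')
  rw [← hsplit, ← horth]
  exact ⟨vN_add_le hP hQ, vN_add_eq_iff hP hQ⟩
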